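/- arXiv:2410.12503 — 2 statements merged into one kernel-verified Lean document; each statement's English description precedes it below -/
import Mathlib

section
/- The collection 𝒰 = {E ⊆ ℝ : ℝ \ E is I-sparse at every point of E} is a topology on ℝ: it contains ∅ and ℝ, is closed under arbitrary unions, and is closed under finite intersections. -/
open MeasureTheory Filter Set
open scoped ENNReal

noncomputable section

/-- A nontrivial admissible ideal of subsets of ℕ: closed under subsets and
finite unions, contains every finite set, and does not contain ℕ itself. -/
structure AdmissibleIdeal : Type where
  carrier : Set (Set ℕ)
  subset_mem : ∀ ⦃A B : Set ℕ⦄, A ∈ carrier → B ⊆ A → B ∈ carrier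
  union_mem : ∀ ⦃A B : Set ℕ⦄, A ∈ carrier → B ∈ carrier → A ∪ B ∈ carrier
  finite_mem : ∀ A : Set ℕ, A.Finite → A ∈ carrier
  univ_not_mem : (Set.univ : Set ℕ) ∉ carrier

/-- The filter F(I) = {M ⊆ ℕ : ℕ \ M ∈ I} associated with the ideal I. -/
def AdmissibleIdeal.filter (I : AdmissibleIdeal) : Filter ℕ :=
  Filter.comk (· ∈ I.carrier) (I.finite_mem ∅ Set.finite_empty)
    (fun _t ht _s hs => I.subset_mem ht hs)
    (fun _s hs _t ht => I.union_mem hs ht)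

/-- A sequence of closed intervals admissible about the point `p`:
each `J n` is a closed interval containing `p`, and
`{n : 0 < λ(J n) < 1/n} ∈ F(I)`. -/
def AdmissibleSeq (I : AdmissibleIdeal) (p : ℝ) (J : ℕ → Set ℝ) : Prop :=
  (∀ n, ∃ a b : ℝ, a ≤ b ∧ J n = Set.Icc a b) ∧ (∀ n, p ∈ J n) ∧
    {n : ℕ | 0 < volume (J n) ∧ volume (J n) < (n : ℝ≥0∞)⁻¹} ∈ I.filter

/-- The sequence n ↦ λ(E ∩ J n)/λ(J n) (interpreted as 0 when λ(J n) = 0). -/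
def ratioSeq (E : Set ℝ) (J : ℕ → Set ℝ) : ℕ → ℝ :=
  fun n => (volume (E ∩ J n) / volume (J n)).toReal

/-- Upper I-density of `E` at `p`: sup over admissible sequences of the
limsup along `F(I)` of the measure ratios. -/
def upperIDensity (I : AdmissibleIdeal) (p : ℝ) (E : Set ℝ) : ℝ :=
  sSup {l : ℝ | ∃ J : ℕ → Set ℝ, AdmissibleSeq I p J ∧
    l = Filter.limsup (ratioSeq E J) I.filter}

/-- Lower I-density of `E` at `p`: inf over admissible sequences of the
liminf along `F(I)` of the measure ratios. -/
def lowerIDensity (I : AdmissibleIdeal) (p : ℝ) (E : Set ℝ) : ℝ :=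
  sInf {l : ℝ | ∃ J : ℕ → Set ℝ, AdmissibleSeq I p J ∧
    l = Filter.liminf (ratioSeq E J) I.filter}

/-- `C` is a measurable cover of `A`. -/
def IsMeasurableCover (C A : Set ℝ) : Prop :=
  MeasurableSet C ∧ A ⊆ C ∧
    ∀ F : Set ℝ, MeasurableSet F → F ⊆ C \ A → volume F = 0

/-- `A` is I-sparse at `x`, i.e. `A ∈ S_I(x)`. -/
def ISparseAt (I : AdmissibleIdeal) (A : Set ℝ) (x : ℝ) : Prop :=
  ∀ B : Set ℝ, MeasurableSet B → upperIDensity I x B < 1 →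
    ∀ C : Set ℝ, IsMeasurableCover C A → upperIDensity I x (C ∪ B) < 1

/-- The I-density topology T_I. -/
def IDensityTopology (I : AdmissibleIdeal) : Set (Set ℝ) :=
  {E | MeasurableSet E ∧ ∀ x ∈ E, lowerIDensity I x E = 1}

/-- The I-sparse set topology 𝒰. -/
def sparseTop (I : AdmissibleIdeal) : Set (Set ℝ) :=
  {E | ∀ x ∈ E, ISparseAt I Eᶜ x}

/-!
Upper I-density is monotone along inclusion up to null sets, and a measurable cover of `A`
lies, up to a null set, inside every measurable superset of `A`. So I-sparseness at `x` does not
depend on the chosen cover; it passes to subsets, and applying the definition twice shows it is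
preserved by finite unions. As membership in 𝒰 is sparseness of the complement, this gives
closure under arbitrary unions and finite intersections; the complement of `ℝ` is null.
-/

instance AdmissibleIdeal.filter_neBot (I : AdmissibleIdeal) : I.filter.NeBot :=
  ⟨fun h => I.univ_not_mem <| by
    have h_empty : (∅ : Set ℕ) ∈ I.filter := h ▸ Filter.mem_bot
    simpa [AdmissibleIdeal.filter, Filter.mem_comk] using h_empty⟩

section Density

variable {I : AdmissibleIdeal} {p : ℝ} {E E' : Set ℝ} {J : ℕ → Set ℝ}

lemma ratioSeq_nonneg (n : ℕ) : 0 ≤ ratioSeq E J n :=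
  ENNReal.toReal_nonneg

lemma volume_inter_div_volume_le_one (n : ℕ) : volume (E ∩ J n) / volume (J n) ≤ 1 :=
  ENNReal.div_le_of_le_mul (by simpa using measure_mono inter_subset_right)

lemma ratioSeq_le_one (n : ℕ) : ratioSeq E J n ≤ 1 := by
  simpa [ratioSeq] using ENNReal.toReal_mono (by simp) (volume_inter_div_volume_le_one n)

lemma ratioSeq_mono_ae (h : E ≤ᵐ[volume] E') : ratioSeq E J ≤ ratioSeq E' J := fun n =>
  ENNReal.toReal_mono (volume_inter_div_volume_le_one n |>.trans_lt ENNReal.one_lt_top).ne <|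
    ENNReal.div_le_div_right (measure_mono_ae (h.inter EventuallyLE.rfl)) _

lemma limsup_ratioSeq_le_one : limsup (ratioSeq E J) I.filter ≤ 1 :=
  limsup_le_of_le (isCoboundedUnder_le_of_le _ ratioSeq_nonneg) (.of_forall ratioSeq_le_one)

lemma upperIDensity_eq_iSup :
    upperIDensity I p E = ⨆ J : {J // AdmissibleSeq I p J}, limsup (ratioSeq E J) I.filter := by
  rw [upperIDensity, iSup, range]
  congr 1
  ext l
  simp [eq_comm]

lemma upperIDensity_mono_ae (h : E ≤ᵐ[volume] E') :
    upperIDensity I p E ≤ upperIDensity I p E' := by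
  rw [upperIDensity_eq_iSup, upperIDensity_eq_iSup]
  refine ciSup_mono ⟨1, forall_mem_range.2 fun _ => limsup_ratioSeq_le_one⟩ fun J => ?_
  exact limsup_le_limsup (.of_forall (ratioSeq_mono_ae h))
    (isCoboundedUnder_le_of_le _ ratioSeq_nonneg) (isBoundedUnder_of ⟨1, ratioSeq_le_one⟩)

end Density

lemma IsMeasurableCover.ae_le {C A D : Set ℝ} (hC : IsMeasurableCover C A)
    (hD : MeasurableSet D) (hAD : A ⊆ D) : C ≤ᵐ[volume] D :=
  ae_le_set.2 <| hC.2.2 _ (hC.1.diff hD) (sdiff_subset_sdiff_right hAD)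

lemma isMeasurableCover_toMeasurable (A : Set ℝ) :
    IsMeasurableCover (toMeasurable volume A) A := by
  refine ⟨measurableSet_toMeasurable _ _, subset_toMeasurable _ _, fun F hF hFC => ?_⟩
  have hAF : A ∩ F = ∅ := disjoint_iff_inter_eq_empty.1 <|
    disjoint_left.2 fun _ hA hF => (hFC hF).2 hA
  simpa [inter_eq_right.2 (hFC.trans sdiff_subset), hAF] using
    Measure.measure_toMeasurable_inter_of_sFinite (μ := volume) hF A

section Sparse

variable {I : AdmissibleIdeal} {x : ℝ} {A A' : Set ℝ}

lemma iSparseAt_of_volume_eq_zero (hA : volume A = 0) : ISparseAt I A x := by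
  intro B _ hB C hC
  have hC_null : C ≤ᵐ[volume] (∅ : Set ℝ) :=
    (hC.ae_le (measurableSet_toMeasurable _ _) (subset_toMeasurable _ _)).trans <|
      ae_le_set.2 <| by rw [sdiff_empty, measure_toMeasurable, hA]
  have hCB := upperIDensity_mono_ae (I := I) (p := x) (hC_null.union (EventuallyLE.refl _ B))
  rw [empty_union] at hCB
  exact hCB.trans_lt hB

lemma ISparseAt.mono (hA : ISparseAt I A x) (h : A' ⊆ A) : ISparseAt I A' x := by
  intro B hB hBx C hC
  have hCA : C ≤ᵐ[volume] toMeasurable volume A :=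
    hC.ae_le (measurableSet_toMeasurable _ _) (h.trans (subset_toMeasurable _ _))
  exact (upperIDensity_mono_ae (hCA.union EventuallyLE.rfl)).trans_lt
    (hA B hB hBx _ (isMeasurableCover_toMeasurable A))

lemma ISparseAt.union (hA : ISparseAt I A x) (hA' : ISparseAt I A' x) :
    ISparseAt I (A ∪ A') x := by
  intro B hB hBx C hC
  let D := toMeasurable volume A
  let D' := toMeasurable volume A'
  have hD'B : upperIDensity I x (D' ∪ B) < 1 :=
    hA' B hB hBx D' (isMeasurableCover_toMeasurable A')
  have hDD'B : upperIDensity I x (D ∪ (D' ∪ B)) < 1 :=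
    hA _ ((measurableSet_toMeasurable _ _).union hB) hD'B D (isMeasurableCover_toMeasurable A)
  have hC_le : C ≤ᵐ[volume] (D ∪ D' : Set ℝ) :=
    hC.ae_le ((measurableSet_toMeasurable _ _).union (measurableSet_toMeasurable _ _))
      (union_subset_union (subset_toMeasurable _ _) (subset_toMeasurable _ _))
  rw [← union_assoc] at hDD'B
  exact (upperIDensity_mono_ae (hC_le.union EventuallyLE.rfl)).trans_lt hDD'B

end Sparse

/-- The collection 𝒰 is a topology on ℝ: it contains ∅ and ℝ, is closed under
arbitrary unions and under finite intersections. -/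
theorem sparseTop_is_topology (I : AdmissibleIdeal) :
    (∅ : Set ℝ) ∈ sparseTop I ∧ (Set.univ : Set ℝ) ∈ sparseTop I ∧
    (∀ S : Set (Set ℝ), S ⊆ sparseTop I → ⋃₀ S ∈ sparseTop I) ∧
    (∀ A ∈ sparseTop I, ∀ B ∈ sparseTop I, A ∩ B ∈ sparseTop I) := by
  refine ⟨fun x hx => hx.elim, fun x _ => ?_, fun S hS x hx => ?_, fun A hA B hB x hx => ?_⟩
  · rw [compl_univ]
    exact iSparseAt_of_volume_eq_zero measure_empty
  · obtain ⟨E, hES, hxE⟩ := hx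
    exact (hS hES x hxE).mono (compl_subset_compl.2 (subset_sUnion_of_mem hES))
  · rw [compl_inter]
    exact (hA x hx.1).union (hB x hx.2)
end
end

section
/- If A ⊆ ℝ is Lebesgue measurable with λ(A) = 0, then A is nowhere dense in the I-sparse set topology: the interior (with respect to the topology whose open sets are 𝒰) of the 𝒰-closure of A is empty. -/
open MeasureTheory Filter Set
open scoped ENNReal

noncomputable section

/-!
A null set `A` is closed in `𝒰`: a measurable cover of a null set is null, and adding a null
set to `B` does not change the upper density of `B`. So an open set `U` inside the closure of
`A` lies in `A` and is null. Then `ℝ` is a measurable cover of `Uᶜ`, and at a point of `U`,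
sparseness of `Uᶜ` tested with `B = ∅` would give `I-d⁻(x, ℝ) < 1`, whereas every admissible
sequence eventually has positive finite length, so `I-d⁻(x, ℝ) = 1`.
-/

lemma AdmissibleIdeal.filter_neBot_s16 (I : AdmissibleIdeal) : I.filter.NeBot := by
  refine ⟨fun h => I.univ_not_mem ?_⟩
  have hempty : (∅ : Set ℕ) ∈ I.filter := h ▸ Filter.mem_bot
  simpa [AdmissibleIdeal.filter, Filter.mem_comk] using hempty

lemma admissibleSeq_Icc (I : AdmissibleIdeal) (p : ℝ) :
    AdmissibleSeq I p (fun n => Icc p (p + ((n : ℝ) + 1)⁻¹)) := by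
  have hpos (n : ℕ) : (0 : ℝ) < ((n : ℝ) + 1)⁻¹ := by positivity
  have hvol (n : ℕ) : volume (Icc p (p + ((n : ℝ) + 1)⁻¹)) = ((n : ℝ≥0∞) + 1)⁻¹ := by
    rw [Real.volume_Icc, add_sub_cancel_left, ENNReal.ofReal_inv_of_pos (by positivity)]
    norm_cast
  refine ⟨fun n => ⟨_, _, by linarith [hpos n], rfl⟩,
    fun n => ⟨le_rfl, by linarith [hpos n]⟩, Filter.univ_mem' fun n => ?_⟩
  rw [mem_ofPred_eq, hvol]
  exact ⟨ENNReal.inv_pos.2 (by simp),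
    ENNReal.inv_lt_inv.2 (ENNReal.lt_add_right (by simp) one_ne_zero)⟩

lemma upperIDensity_eq_of_forall_ratioSeq_eventuallyEq {I : AdmissibleIdeal} {p : ℝ}
    {E : Set ℝ} (c : ℝ)
    (h : ∀ J, AdmissibleSeq I p J → ratioSeq E J =ᶠ[I.filter] fun _ => c) :
    upperIDensity I p E = c := by
  have := I.filter_neBot_s16
  have hlimsup : ∀ J, AdmissibleSeq I p J → limsup (ratioSeq E J) I.filter = c :=
    fun J hJ => by rw [limsup_congr (h J hJ), limsup_const]
  have hset : {l : ℝ | ∃ J, AdmissibleSeq I p J ∧ l = limsup (ratioSeq E J) I.filter} = {c} :=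
    eq_singleton_iff_unique_mem.2
      ⟨⟨_, admissibleSeq_Icc I p, (hlimsup _ (admissibleSeq_Icc I p)).symm⟩,
        fun _ ⟨J, hJ, hl⟩ => hl.trans (hlimsup J hJ)⟩
  rw [upperIDensity, hset, csSup_singleton]

lemma upperIDensity_empty (I : AdmissibleIdeal) (p : ℝ) : upperIDensity I p ∅ = 0 :=
  upperIDensity_eq_of_forall_ratioSeq_eventuallyEq 0 fun _ _ =>
    Filter.Eventually.of_forall fun _ => by simp [ratioSeq]

lemma upperIDensity_univ (I : AdmissibleIdeal) (p : ℝ) : upperIDensity I p univ = 1 :=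
  upperIDensity_eq_of_forall_ratioSeq_eventuallyEq 1 fun _ ⟨_, _, hJ⟩ => by
    filter_upwards [hJ] with n ⟨hpos, hlt⟩
    simp [ratioSeq, ENNReal.div_self hpos.ne' (hlt.trans_le le_top).ne]

lemma upperIDensity_union_of_volume_eq_zero (I : AdmissibleIdeal) (p : ℝ) {C : Set ℝ}
    (B : Set ℝ) (hC : volume C = 0) : upperIDensity I p (C ∪ B) = upperIDensity I p B := by
  have hratio (J : ℕ → Set ℝ) : ratioSeq (C ∪ B) J = ratioSeq B J := funext fun n => by
    rw [ratioSeq, ratioSeq, measure_congr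
      ((union_ae_eq_right_of_ae_eq_empty (ae_eq_empty.2 hC)).inter (ae_eq_refl (J n)))]
  simp only [upperIDensity, hratio]

lemma IsMeasurableCover.volume_eq_zero {C A : Set ℝ} (hC : IsMeasurableCover C A)
    (hA : volume A = 0) : volume C = 0 := by
  obtain ⟨hCm, -, hnull⟩ := hC
  have hdiff : volume (C \ toMeasurable volume A) = 0 :=
    hnull _ (hCm.diff (measurableSet_toMeasurable _ _))
      (sdiff_subset_sdiff_right (subset_toMeasurable _ _))
  exact measure_mono_null (subset_sdiff_union C _)
    (measure_union_null hdiff (by rwa [measure_toMeasurable]))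

lemma isMeasurableCover_univ {A : Set ℝ} (hA : volume Aᶜ = 0) : IsMeasurableCover univ A :=
  ⟨MeasurableSet.univ, subset_univ A, fun _ _ hF => measure_mono_null (fun _ hy => (hF hy).2) hA⟩

lemma ISparseAt.of_volume_eq_zero {I : AdmissibleIdeal} {A : Set ℝ} (hA : volume A = 0)
    (x : ℝ) : ISparseAt I A x := fun B _ hB _ hC => by
  rwa [upperIDensity_union_of_volume_eq_zero I x B (hC.volume_eq_zero hA)]

lemma not_iSparseAt_of_volume_compl_eq_zero (I : AdmissibleIdeal) {A : Set ℝ}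
    (hA : volume Aᶜ = 0) (x : ℝ) : ¬ ISparseAt I A x := fun hsparse => by
  have h := hsparse ∅ MeasurableSet.empty (by rw [upperIDensity_empty]; exact one_pos)
    univ (isMeasurableCover_univ hA)
  rw [union_empty, upperIDensity_univ] at h
  exact h.false

lemma compl_mem_sparseTop_of_volume_eq_zero (I : AdmissibleIdeal) {A : Set ℝ}
    (hA : volume A = 0) : Aᶜ ∈ sparseTop I := fun x _ => by
  rw [compl_compl]
  exact ISparseAt.of_volume_eq_zero hA x

lemma eq_empty_of_mem_sparseTop_of_volume_eq_zero {I : AdmissibleIdeal} {U : Set ℝ}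
    (hU : U ∈ sparseTop I) (h0 : volume U = 0) : U = ∅ :=
  eq_empty_of_forall_notMem fun x hx =>
    not_iSparseAt_of_volume_compl_eq_zero I (by rwa [compl_compl]) x (hU x hx)

theorem sparseTop_nowhere_dense_general (I : AdmissibleIdeal) (A : Set ℝ)
    (h0 : volume A = 0) :
    ∀ U ∈ sparseTop I,
      U ⊆ ⋂₀ {F : Set ℝ | Fᶜ ∈ sparseTop I ∧ A ⊆ F} → U = ∅ := by
  intro U hU hUclosure
  have hUA : U ⊆ A := fun _ hx =>
    hUclosure hx A ⟨compl_mem_sparseTop_of_volume_eq_zero I h0, subset_rfl⟩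
  exact eq_empty_of_mem_sparseTop_of_volume_eq_zero hU (measure_mono_null hUA h0)

/-- A measurable Lebesgue-null set is nowhere dense in the I-sparse set topology:
every member of 𝒰 contained in the 𝒰-closure of `A` is empty. -/
theorem sparseTop_nowhere_dense (I : AdmissibleIdeal) (A : Set ℝ)
    (hA : MeasurableSet A) (h0 : volume A = 0) :
    ∀ U ∈ sparseTop I,
      U ⊆ ⋂₀ {F : Set ℝ | Fᶜ ∈ sparseTop I ∧ A ⊆ F} → U = ∅ :=
  sparseTop_nowhere_dense_general I A h0
end
end
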